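/- arXiv:1212.0714 — 4 statements merged into one kernel-verified Lean document; each statement's English description precedes it below -/
import Mathlib

section
/- Every vertex of the Minkowski cell C_A of an (n,d)-type A arises as a total refinement of A: if v is a vertex of C_A = Σ_i conv{e_j : j ∈ A_i}, then there is an ordered partition P of [d] such that A|P is a total refinement (b_1,...,b_n) with v = Σ_i e_{b_i}. -/
open Finset

/-- An `(n,d)`-type: an `n`-tuple of subsets of `[d]`. -/
abbrev NDType (n d : ℕ) := Fin n → Finset (Fin d)

/-- All entries nonempty. -/
def IsType {n d : ℕ} (A : NDType n d) : Prop := ∀ i, (A i).Nonempty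

/-- A directed edge `u → v` of the comparability graph `CG(A,B)`:
for some coordinate `i`, `u ∈ A i`, `v ∈ B i`, and not both lie in `A i ∩ B i`. -/
def DirEdge {n d : ℕ} (A B : NDType n d) (u v : Fin d) : Prop :=
  u ≠ v ∧ ∃ i, u ∈ A i ∧ v ∈ B i ∧ ¬ (u ∈ A i ∩ B i ∧ v ∈ A i ∩ B i)

/-- An undirected edge of `CG(A,B)`: both endpoints lie in some `A i ∩ B i`. -/
def UndirEdge {n d : ℕ} (A B : NDType n d) (u v : Fin d) : Prop :=
  u ≠ v ∧ ∃ i, u ∈ A i ∩ B i ∧ v ∈ A i ∩ B i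

/-- A step of a directed walk in `CG(A,B)`: a directed edge in the right
direction, or an undirected edge. -/
def Step {n d : ℕ} (A B : NDType n d) (u v : Fin d) : Prop :=
  DirEdge A B u v ∨ UndirEdge A B u v

/-- `CG(A,B)` contains a directed cycle: a closed walk all of whose directed
edges point in the walk direction, with at least one directed edge. -/
def HasDirectedCycle {n d : ℕ} (A B : NDType n d) : Prop :=
  ∃ (k : ℕ) (v : Fin (k + 1) → Fin d),
    v 0 = v (Fin.last k) ∧
    (∀ i : Fin k, Step A B (v i.castSucc) (v i.succ)) ∧
    (∃ i : Fin k, DirEdge A B (v i.castSucc) (v i.succ))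

/-- The comparability graph `CG(A,B)` is acyclic. -/
def Acyclic {n d : ℕ} (A B : NDType n d) : Prop := ¬ HasDirectedCycle A B

/-- An ordered partition of `[d]` into `k` (nonempty, ordered) parts. -/
def IsOrderedPartition {d k : ℕ} (P : Fin k → Finset (Fin d)) : Prop :=
  (∀ a, (P a).Nonempty) ∧ (∀ a b, a ≠ b → Disjoint (P a) (P b)) ∧
    (∀ j : Fin d, ∃ a, j ∈ P a)

/-- `B` is the refinement `A|P` of `A` with respect to the ordered partition `P`:
`B i = A i ∩ P (m i)` where `m i` is the least index with nonempty intersection. -/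
def IsRefinementBy {n d k : ℕ} (A : NDType n d) (P : Fin k → Finset (Fin d))
    (B : NDType n d) : Prop :=
  ∀ i, ∃ a, (A i ∩ P a).Nonempty ∧ (∀ b, b < a → A i ∩ P b = ∅) ∧
    B i = A i ∩ P a

/-- `B` is a refinement of `A` (with respect to some ordered partition). -/
def IsRefinement {n d : ℕ} (B A : NDType n d) : Prop :=
  ∃ (k : ℕ) (P : Fin k → Finset (Fin d)),
    IsOrderedPartition P ∧ IsRefinementBy A P B

/-- A total refinement: a refinement all of whose entries are singletons. -/
def IsTotalRefinement {n d : ℕ} (B A : NDType n d) : Prop :=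
  IsRefinement B A ∧ ∀ i, ∃ j, B i = {j}

/-- A tope: a type all of whose entries are singletons. -/
def IsTope {n d : ℕ} (A : NDType n d) : Prop := ∀ i, ∃ j, A i = {j}
open Pointwise

/-- The `j`-th standard basis vector of `ℝ^d`. -/
noncomputable def stdVec {d : ℕ} (j : Fin d) : Fin d → ℝ := Pi.single j 1

/-- The Minkowski cell `C_A = Σᵢ conv{e_j : j ∈ A i} ⊆ ℝ^d` of an `(n,d)`-type. -/
noncomputable def cell {n d : ℕ} (A : NDType n d) : Set (Fin d → ℝ) :=
  ∑ i : Fin n, convexHull ℝ (stdVec '' (A i : Set (Fin d)))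

/-- The dilated simplex `nΔ^{d-1} ⊆ ℝ^d`. -/
def dilSimplex (n d : ℕ) : Set (Fin d → ℝ) :=
  {x | (∀ j, 0 ≤ x j) ∧ ∑ j, x j = (n : ℝ)}

/-- A mixed subdivision of `nΔ^{d-1}`, encoded by the set of types of its cells:
all entries of a cell type are nonempty, the family of cells is closed under
faces (= refinements), any two cells intersect in the Minkowski sum of the
intersections of their summands, and the cells cover `nΔ^{d-1}`. -/
structure MixedSubdivision (n d : ℕ) where
  cells : Set (NDType n d)
  isType : ∀ A ∈ cells, IsType A
  refine_closed : ∀ A ∈ cells, ∀ B, IsRefinement B A → B ∈ cells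
  inter : ∀ A ∈ cells, ∀ B ∈ cells,
    cell A ∩ cell B = cell (fun i => A i ∩ B i)
  covers : ⋃ A ∈ cells, cell A = dilSimplex n d

/-!
A vertex `v` of `C_A = conv {e_{b 1} + ⋯ + e_{b n} : b i ∈ A i}` is one of these sums, and a
linear functional `f` attains its maximum over them only at `v`. Swapping a single `b i` for
another `j ∈ A i` then shows that `b i` is the unique maximiser of the weights `W j = f e_j`
on `A i`. Ordering `[d]` by the level sets of `W`, from the highest value down, gives an ordered
partition `P` for which `A|P` picks out exactly these maximisers.
-/

section LevelPartition

variable {d : ℕ} (W : Fin d → ℝ)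

noncomputable def levelValue (a : Fin (univ.image W).card) : ℝ :=
  (univ.image W).orderEmbOfFin rfl a.rev

theorem levelValue_strictAnti : StrictAnti (levelValue W) := fun _ _ h =>
  ((univ.image W).orderEmbOfFin rfl).strictMono (Fin.rev_lt_rev.mpr h)

theorem exists_levelValue_eq (j : Fin d) : ∃ a, levelValue W a = W j := by
  have hj : W j ∈ Set.range ((univ.image W).orderEmbOfFin rfl) := by
    rw [range_orderEmbOfFin]
    exact mem_image_of_mem W (mem_univ j)
  obtain ⟨a, ha⟩ := hj
  exact ⟨a.rev, by rw [levelValue, Fin.rev_rev, ha]⟩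

theorem exists_eq_levelValue (a : Fin (univ.image W).card) : ∃ j, W j = levelValue W a := by
  obtain ⟨j, -, hj⟩ := mem_image.1 (orderEmbOfFin_mem (univ.image W) rfl a.rev)
  exact ⟨j, hj⟩

noncomputable def levelPartition (a : Fin (univ.image W).card) : Finset (Fin d) :=
  univ.filter fun j => W j = levelValue W a

theorem mem_levelPartition {a : Fin (univ.image W).card} {j : Fin d} :
    j ∈ levelPartition W a ↔ W j = levelValue W a := by
  simp [levelPartition]

theorem isOrderedPartition_levelPartition : IsOrderedPartition (levelPartition W) := by
  refine ⟨fun a => ?_, fun a c hac => ?_, fun j => ?_⟩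
  · obtain ⟨j, hj⟩ := exists_eq_levelValue W a
    exact ⟨j, mem_levelPartition W |>.2 hj⟩
  · refine disjoint_left.2 fun j hja hjc => hac ?_
    rw [mem_levelPartition] at hja hjc
    exact (levelValue_strictAnti W).injective (hja.symm.trans hjc)
  · obtain ⟨a, ha⟩ := exists_levelValue_eq W j
    exact ⟨a, mem_levelPartition W |>.2 ha.symm⟩

theorem isRefinementBy_levelPartition {n : ℕ} (A : NDType n d) (hA : IsType A) :
    IsRefinementBy A (levelPartition W) fun i => (A i).filter fun j => ∀ j' ∈ A i, W j' ≤ W j := by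
  intro i
  obtain ⟨j₀, hj₀, hmax⟩ := (A i).exists_max_image W (hA i)
  obtain ⟨a, ha⟩ := exists_levelValue_eq W j₀
  refine ⟨a, ⟨j₀, mem_inter.2 ⟨hj₀, mem_levelPartition W |>.2 ha.symm⟩⟩, fun c hc => ?_, ?_⟩
  · refine eq_empty_iff_forall_notMem.2 fun j hj => ?_
    rw [mem_inter, mem_levelPartition] at hj
    have := levelValue_strictAnti W hc
    linarith [hmax j hj.1]
  · ext j
    simp only [mem_filter, mem_inter, mem_levelPartition, ha]
    exact ⟨fun ⟨hj, hle⟩ => ⟨hj, le_antisymm (hmax j hj) (hle j₀ hj₀)⟩,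
      fun ⟨hj, h⟩ => ⟨hj, fun j' hj' => h ▸ hmax j' hj'⟩⟩

end LevelPartition

theorem exists_forall_lt_of_mem_extremePoints_convexHull {E : Type*} [AddCommGroup E]
    [Module ℝ E] [TopologicalSpace E] [IsTopologicalAddGroup E] [ContinuousSMul ℝ E]
    [LocallyConvexSpace ℝ E] [T2Space E] {T : Set E} (hT : T.Finite) {v : E}
    (hv : v ∈ (convexHull ℝ T).extremePoints ℝ) :
    ∃ f : StrongDual ℝ E, ∀ x ∈ T, x ≠ v → f x < f v := by
  have hv' : v ∉ convexHull ℝ (T \ {v}) := fun h =>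
    ((convex_convexHull ℝ T).mem_extremePoints_iff_mem_sdiff_convexHull_sdiff.1 hv).2
      (convexHull_mono (Set.sdiff_subset_sdiff_left (subset_convexHull ℝ T)) h)
  obtain ⟨f, u, hfu, huv⟩ := geometric_hahn_banach_closed_point (convex_convexHull ℝ _)
    ((hT.sdiff.isCompact_convexHull ℝ).isClosed) hv'
  exact ⟨f, fun x hx hxv => (hfu x (subset_convexHull ℝ _ ⟨hx, hxv⟩)).trans huv⟩

section Selections

variable {n d : ℕ}

theorem stdVec_injective : Function.Injective (stdVec : Fin d → Fin d → ℝ) := fun j j' h => by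
  by_contra hne
  simpa [stdVec, Pi.single_apply, hne] using congrFun h j

theorem sum_stdVec_update (b : Fin n → Fin d) (i : Fin n) (j : Fin d) :
    ∑ i', stdVec (Function.update b i j i') = ∑ i', stdVec (b i') - stdVec (b i) + stdVec j := by
  simp_rw [Function.apply_update (fun _ => stdVec) b i j]
  rw [sum_update_of_mem (mem_univ i),
    sum_eq_add_sum_sdiff_singleton_of_mem (mem_univ i) fun i' => stdVec (b i')]
  abel

def selectionSums (A : NDType n d) : Set (Fin d → ℝ) :=
  (fun b : Fin n → Fin d => ∑ i, stdVec (b i)) '' Set.univ.pi fun i => (A i : Set (Fin d))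

theorem cell_eq_convexHull_selectionSums (A : NDType n d) :
    cell A = convexHull ℝ (selectionSums A) := by
  rw [cell, ← convexHull_sum, ← Set.image_fintype_sum_pi, ← Set.piMap_image_univ_pi,
    Set.image_image, selectionSums]
  rfl

theorem apply_stdVec_lt_of_forall_lt_on_selectionSums {F : Type*}
    [FunLike F (Fin d → ℝ) ℝ] [AddMonoidHomClass F (Fin d → ℝ) ℝ] (f : F) {A : NDType n d}
    {b : Fin n → Fin d} (hb : ∀ i, b i ∈ A i)
    (hf : ∀ x ∈ selectionSums A, x ≠ ∑ i, stdVec (b i) → f x < f (∑ i, stdVec (b i)))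
    {i : Fin n} {j : Fin d} (hj : j ∈ A i) (hne : j ≠ b i) :
    f (stdVec j) < f (stdVec (b i)) := by
  have hmem : ∑ i', stdVec (Function.update b i j i') ∈ selectionSums A := by
    refine ⟨_, Set.mem_univ_pi.2 fun i' => ?_, rfl⟩
    rcases eq_or_ne i' i with rfl | h
    · simpa using hj
    · simpa [h] using hb i'
  have hswap : ∑ i', stdVec (Function.update b i j i') ≠ ∑ i, stdVec (b i) := by
    rw [sum_stdVec_update]
    intro h
    exact hne (stdVec_injective (by linear_combination h))
  have := hf _ hmem hswap
  rw [sum_stdVec_update, map_add, map_sub] at this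
  linarith

end Selections

theorem vertex_is_total_refinement_general {n d : ℕ} (A : NDType n d)
    (v : Fin d → ℝ) (hv : v ∈ Set.extremePoints ℝ (cell A)) :
    ∃ (k : ℕ) (P : Fin k → Finset (Fin d)) (b : Fin n → Fin d),
      IsOrderedPartition P ∧
      IsRefinementBy A P (fun i => ({b i} : Finset (Fin d))) ∧
      v = ∑ i, stdVec (b i) := by
  rw [cell_eq_convexHull_selectionSums] at hv
  obtain ⟨b, hb, rfl⟩ := extremePoints_convexHull_subset hv
  rw [Set.mem_univ_pi] at hb
  obtain ⟨f, hf⟩ := exists_forall_lt_of_mem_extremePoints_convexHull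
    ((Set.toFinite _).image _) hv
  set W : Fin d → ℝ := fun j => f (stdVec j)
  have hface : (fun i => (A i).filter fun j => ∀ j' ∈ A i, W j' ≤ W j) = fun i => {b i} := by
    ext i j
    simp only [mem_filter, mem_singleton]
    refine ⟨fun ⟨hj, hle⟩ => by_contra fun hne => ?_, ?_⟩
    · exact (hle (b i) (hb i)).not_gt
        (apply_stdVec_lt_of_forall_lt_on_selectionSums f hb hf hj hne)
    · rintro rfl
      refine ⟨hb i, fun j' hj' => ?_⟩
      rcases eq_or_ne j' (b i) with rfl | hne
      · exact le_rfl
      · exact (apply_stdVec_lt_of_forall_lt_on_selectionSums f hb hf hj' hne).le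
  refine ⟨_, levelPartition W, b, isOrderedPartition_levelPartition W, ?_, rfl⟩
  rw [← hface]
  exact isRefinementBy_levelPartition W A fun i => ⟨b i, hb i⟩

/-- Every vertex (extreme point) of the Minkowski cell `C_A`
arises from a total refinement of `A`: it equals `Σᵢ e_{b i}` where
`(fun i => {b i}) = A|P` for some ordered partition `P` of `[d]`. -/
theorem vertex_is_total_refinement {n d : ℕ} (A : NDType n d) (hA : IsType A)
    (v : Fin d → ℝ) (hv : v ∈ Set.extremePoints ℝ (cell A)) :
    ∃ (k : ℕ) (P : Fin k → Finset (Fin d)) (b : Fin n → Fin d),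
      IsOrderedPartition P ∧
      IsRefinementBy A P (fun i => ({b i} : Finset (Fin d))) ∧
      v = ∑ i, stdVec (b i) :=
  vertex_is_total_refinement_general A v hv
end

section
/- Let S be a mixed subdivision of nΔ^{d-1}, and let A, B be types of cells of S such that A_i ∩ B_i ≠ ∅ for every i ∈ [n]. Then the componentwise intersection A ∩ B = (A_1∩B_1,...,A_n∩B_n) is also the type of a cell of S. (It suffices to prove this from: the comparability graph of any two types of cells of S is acyclic, and every refinement of a type of S is a type of S.) -/
open Finset

open Pointwise

/-! Rank every `j ∈ [d]` by the number of vertices reachable from it by steps of `CG(A,B)`.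
Ranks cannot increase along a step, and acyclicity makes them drop strictly along a directed
edge. Elements of `A i ∩ B i` are joined by undirected edges, so they share one rank, while each
`w ∈ A i \ B i` has a directed edge into `A i ∩ B i`. Hence `A i ∩ B i` is exactly the set of
rank-minimal elements of `A i`, i.e. `A ∩ B` is the refinement of `A` by the ordered partition
of `[d]` into rank levels, and the surrounding property applies. -/

open Relation

section Reachability

variable {α : Type*} {R : α → α → Prop}

lemma rel_snoc_castSucc_succ {k : ℕ} {v : Fin (k + 1) → α} {c : α}
    (hv : ∀ i : Fin k, R (v i.castSucc) (v i.succ)) (hc : R (v (Fin.last k)) c) :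
    ∀ i : Fin (k + 1),
      R (Fin.snoc (α := fun _ => α) v c i.castSucc) (Fin.snoc (α := fun _ => α) v c i.succ) := by
  intro i
  induction i using Fin.lastCases with
  | last => simpa using hc
  | cast j =>
    rw [Fin.succ_castSucc, Fin.snoc_castSucc, Fin.snoc_castSucc]
    exact hv j

lemma exists_fin_path_of_reflTransGen {u w : α} (h : ReflTransGen R u w) :
    ∃ (k : ℕ) (v : Fin (k + 1) → α), v 0 = u ∧ v (Fin.last k) = w ∧
      ∀ i : Fin k, R (v i.castSucc) (v i.succ) := by
  induction h with
  | refl => exact ⟨0, fun _ => u, rfl, rfl, Fin.elim0⟩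
  | @tail b c _ hbc ih =>
    obtain ⟨k, v, hv0, hvk, hstep⟩ := ih
    exact ⟨k + 1, Fin.snoc v c, by simpa using hv0, Fin.snoc_last _ _,
      rel_snoc_castSucc_succ hstep (hvk ▸ hbc)⟩

variable [Fintype α] (R)

open Classical in
noncomputable def reachCount (u : α) : ℕ := #{v | ReflTransGen R u v}

variable {R}

lemma reachCount_le_of_reflTransGen {u v : α} (h : ReflTransGen R u v) :
    reachCount R v ≤ reachCount R u := by
  classical
  exact card_le_card fun x hx => by simpa using h.trans (by simpa using hx)

lemma reachCount_lt_of_reflTransGen {u v : α} (h : ReflTransGen R u v)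
    (h' : ¬ ReflTransGen R v u) : reachCount R v < reachCount R u := by
  classical
  refine card_lt_card ⟨fun x hx => by simpa using h.trans (by simpa using hx), fun hsub => ?_⟩
  exact h' (by simpa using hsub (by simpa using ReflTransGen.refl (r := R) (a := u)))

end Reachability

section RankPartition

variable {n d : ℕ} {β : Type*} [LinearOrder β] (r : Fin d → β)

def rankPartition : Fin #(univ.image r) → Finset (Fin d) :=
  fun a => {j | r j = (univ.image r).orderEmbOfFin rfl a}

variable {r}

lemma mem_rankPartition {j : Fin d} {a : Fin #(univ.image r)} :
    j ∈ rankPartition r a ↔ r j = (univ.image r).orderEmbOfFin rfl a := by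
  simp [rankPartition]

lemma exists_mem_rankPartition (j : Fin d) : ∃ a, j ∈ rankPartition r a := by
  have hj : r j ∈ Set.range ((univ.image r).orderEmbOfFin rfl) := by
    simp [range_orderEmbOfFin]
  obtain ⟨a, ha⟩ := hj
  exact ⟨a, mem_rankPartition.2 ha.symm⟩

variable (r) in
lemma isOrderedPartition_rankPartition : IsOrderedPartition (rankPartition r) := by
  refine ⟨fun a => ?_, fun a b hab => ?_, exists_mem_rankPartition⟩
  · obtain ⟨j, -, hj⟩ := mem_image.1 ((univ.image r).orderEmbOfFin_mem rfl a)
    exact ⟨j, mem_rankPartition.2 hj⟩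
  · refine disjoint_left.2 fun j hja hjb => hab ?_
    exact ((univ.image r).orderEmbOfFin rfl).injective
      ((mem_rankPartition.1 hja).symm.trans (mem_rankPartition.1 hjb))

lemma isRefinement_of_rank (A B : NDType n d)
    (h : ∀ i, ∃ u ∈ A i, (∀ w ∈ A i, r u ≤ r w) ∧ B i = {w ∈ A i | r w = r u}) :
    IsRefinement B A := by
  refine ⟨_, rankPartition r, isOrderedPartition_rankPartition r, fun i => ?_⟩
  obtain ⟨u, hu, hmin, hB⟩ := h i
  obtain ⟨a, hua⟩ := exists_mem_rankPartition (r := r) u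
  have hru := mem_rankPartition.1 hua
  refine ⟨a, ⟨u, mem_inter.2 ⟨hu, hua⟩⟩, fun b hb => ?_, ?_⟩
  · refine eq_empty_of_forall_notMem fun w hw => ?_
    obtain ⟨hwA, hwb⟩ := mem_inter.1 hw
    have hlt : r w < r u := by
      rw [mem_rankPartition.1 hwb, hru]
      exact ((univ.image r).orderEmbOfFin rfl).strictMono hb
    exact (hmin w hwA).not_gt hlt
  · ext w
    simp [hB, mem_rankPartition, hru]

end RankPartition

section ComparabilityGraph

variable {n d : ℕ} {A B : NDType n d}

lemma hasDirectedCycle_of_reflTransGen {u w : Fin d} (hwalk : ReflTransGen (Step A B) u w)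
    (hedge : DirEdge A B w u) : HasDirectedCycle A B := by
  obtain ⟨k, v, hv0, hvk, hstep⟩ := exists_fin_path_of_reflTransGen hwalk
  exact ⟨k + 1, Fin.snoc v u, by simpa using hv0,
    rel_snoc_castSucc_succ hstep (hvk ▸ Or.inl hedge), Fin.last k, by simpa [hvk] using hedge⟩

lemma reachCount_eq_of_mem_inter {i : Fin n} {u w : Fin d} (hu : u ∈ A i ∩ B i)
    (hw : w ∈ A i ∩ B i) : reachCount (Step A B) w = reachCount (Step A B) u := by
  obtain rfl | huw := eq_or_ne u w
  · rfl
  exact le_antisymm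
    (reachCount_le_of_reflTransGen (.single (Or.inr ⟨huw, i, hu, hw⟩)))
    (reachCount_le_of_reflTransGen (.single (Or.inr ⟨huw.symm, i, hw, hu⟩)))

lemma reachCount_lt_of_mem_sdiff (hAB : Acyclic A B) {i : Fin n} {u w : Fin d}
    (hu : u ∈ A i ∩ B i) (hwA : w ∈ A i) (hwB : w ∉ B i) :
    reachCount (Step A B) u < reachCount (Step A B) w := by
  have hedge : DirEdge A B w u :=
    ⟨fun h => hwB (h ▸ (mem_inter.1 hu).2), i, hwA, (mem_inter.1 hu).2,
      fun h => hwB (mem_inter.1 h.1).2⟩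
  exact reachCount_lt_of_reflTransGen (.single (Or.inl hedge))
    fun hback => hAB (hasDirectedCycle_of_reflTransGen hback hedge)

theorem isRefinement_inter_of_acyclic (hAB : Acyclic A B) (hne : ∀ i, (A i ∩ B i).Nonempty) :
    IsRefinement (fun i => A i ∩ B i) A := by
  refine isRefinement_of_rank (r := reachCount (Step A B)) A _ fun i => ?_
  obtain ⟨u, hu⟩ := hne i
  have hrank_eq : ∀ w ∈ A i, w ∈ B i → reachCount (Step A B) w = reachCount (Step A B) u :=
    fun w hwA hwB => reachCount_eq_of_mem_inter hu (mem_inter.2 ⟨hwA, hwB⟩)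
  refine ⟨u, (mem_inter.1 hu).1, fun w hwA => ?_, ?_⟩
  · by_cases hwB : w ∈ B i
    · exact (hrank_eq w hwA hwB).ge
    · exact (reachCount_lt_of_mem_sdiff hAB hu hwA hwB).le
  · ext w
    simp only [mem_inter, mem_filter, and_congr_right_iff]
    refine fun hwA => ⟨hrank_eq w hwA, fun hw => by_contra fun hwB => ?_⟩
    exact (reachCount_lt_of_mem_sdiff hAB hu hwA hwB).ne' hw

end ComparabilityGraph

theorem inter_type_mem_general {n d : ℕ} (S : Set (NDType n d))
    (hcomp : ∀ A ∈ S, ∀ B ∈ S, Acyclic A B)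
    (hsurr : ∀ A ∈ S, ∀ B, IsRefinement B A → B ∈ S)
    (A B : NDType n d) (hA : A ∈ S) (hB : B ∈ S)
    (hne : ∀ i, (A i ∩ B i).Nonempty) :
    (fun i => A i ∩ B i) ∈ S :=
  hsurr A hA _ (isRefinement_inter_of_acyclic (hcomp A hA B hB) hne)

/-- If a collection of types satisfies the comparability
property (acyclic comparability graphs) and the surrounding property (closure
under refinement), as the types of cells of a mixed subdivision of `nΔ^{d-1}`
do, then it is closed under componentwise intersections that are nonempty in
every position. -/
theorem inter_type_mem {n d : ℕ} (S : Set (NDType n d))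
    (htype : ∀ A ∈ S, IsType A)
    (hcomp : ∀ A ∈ S, ∀ B ∈ S, Acyclic A B)
    (hsurr : ∀ A ∈ S, ∀ B, IsRefinement B A → B ∈ S)
    (A B : NDType n d) (hA : A ∈ S) (hB : B ∈ S)
    (hne : ∀ i, (A i ∩ B i).Nonempty) :
    (fun i => A i ∩ B i) ∈ S :=
  inter_type_mem_general S hcomp hsurr A B hA hB hne
end

section
/- Let A, B be (n,d)-types with CG(A,B) acyclic, A_j = B_j for j ≠ i, and set C = A ∪ B componentwise. Then every total refinement of A is a total refinement of C, and consequently the set of total refinements of C equals the union of the sets of total refinements of A and of B. -/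
open Finset

open Pointwise

/-!
A choice of one element `t k ∈ C k` per coordinate is a total refinement of `C` exactly when the
relation "`t k` precedes every other element of `C k`" is acyclic: an ordered partition into
singletons is a topological sort of it. For a total refinement of `A`, passing to `C = A ∪ B` only
adds precedences `t i → v` with `v ∈ B i \ A i`, which are directed edges of `CG(A,B)`. A cycle
through such an edge returns to `t i` along precedences coming from coordinates `k ≠ i`, where
`A k = B k`, so they are undirected edges of `CG(A,B)`: together a directed cycle. The case of `B`
is symmetric, and a total refinement of `C` chooses `t i` in `A i` or in `B i`, hence refines `A`
or `B`.
-/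

open Relation

namespace Relation

variable {α : Type*} {r s : α → α → Prop}

/-- Topological sorting, via the Szpilrajn extension theorem. -/
theorem exists_equiv_fin_of_irrefl_transGen [Fintype α] (hr : ∀ x, ¬ TransGen r x x) :
    ∃ e : α ≃ Fin (Fintype.card α), ∀ x y, r x y → e x < e y := by
  have : IsPartialOrder α (ReflTransGen r) :=
    { refl := fun _ => ReflTransGen.refl
      trans := fun _ _ _ => ReflTransGen.trans
      antisymm := fun x y hxy hyx => by
        rcases reflTransGen_iff_eq_or_transGen.1 hxy with rfl | hxy
        · rfl
        · exact (hr x (hxy.trans_left hyx)).elim }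
  obtain ⟨le, hle, hrle⟩ := extend_partialOrder (ReflTransGen r)
  let _ : LinearOrder α :=
    { le := le
      le_refl := hle.refl
      le_trans := hle.trans
      le_antisymm := hle.antisymm
      le_total := hle.total
      toDecidableLE := Classical.decRel _ }
  refine ⟨(Fintype.orderIsoFinOfCardEq α rfl).symm.toEquiv, fun x y hxy => ?_⟩
  have hlt : x < y := by
    refine lt_of_le_of_ne (hrle _ _ (ReflTransGen.single hxy)) ?_
    rintro rfl
    exact hr x (TransGen.single hxy)
  exact (Fintype.orderIsoFinOfCardEq α rfl).symm.lt_iff_lt.2 hlt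

theorem TransGen.mono_or_exists {q : α → α → Prop} (hq : ∀ a b, q a b → r a b ∨ s a b)
    {x y : α} (h : TransGen q x y) :
    TransGen r x y ∨ ∃ a b, s a b ∧ ReflTransGen q x a ∧ ReflTransGen q b y := by
  induction h with
  | single hxy =>
    exact (hq _ _ hxy).imp TransGen.single fun hs =>
      ⟨_, _, hs, ReflTransGen.refl, ReflTransGen.refl⟩
  | @tail b c hxb hbc ih =>
    rcases ih with ih | ⟨a, a', hs, hxa, ha'b⟩
    · rcases hq _ _ hbc with hr | hs
      · exact Or.inl (ih.tail hr)
      · exact Or.inr ⟨b, c, hs, hxb.to_reflTransGen, ReflTransGen.refl⟩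
    · exact Or.inr ⟨a, a', hs, hxa, ha'b.tail hbc⟩

/-- Cutting a walk at its first visit to its endpoint. -/
theorem ReflTransGen.restrict_ne_target {x y : α} (h : ReflTransGen r x y) :
    ReflTransGen (fun a b => r a b ∧ a ≠ y) x y := by
  induction h using ReflTransGen.head_induction_on with
  | refl => exact ReflTransGen.refl
  | @head a b hab _ ih =>
    by_cases hay : a = y
    · exact hay ▸ ReflTransGen.refl
    · exact ih.head ⟨hab, hay⟩

theorem ReflTransGen.exists_fin_walk {x y : α} (h : ReflTransGen r x y) :
    ∃ (m : ℕ) (f : Fin (m + 1) → α), f 0 = x ∧ f (Fin.last m) = y ∧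
      ∀ j : Fin m, r (f j.castSucc) (f j.succ) := by
  induction h using ReflTransGen.head_induction_on with
  | refl => exact ⟨0, fun _ => y, rfl, rfl, fun j => j.elim0⟩
  | @head a b hab _ ih =>
    obtain ⟨m, f, hf0, hfl, hf⟩ := ih
    refine ⟨m + 1, Fin.cons a f, rfl, by rw [← Fin.succ_last, Fin.cons_succ, hfl], ?_⟩
    intro j
    cases j using Fin.cases with
    | zero => simpa [hf0] using hab
    | succ j => simpa [← Fin.succ_castSucc] using hf j

end Relation

section ComparabilityGraph

variable {n d : ℕ} {A B : NDType n d}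

theorem undirEdge_comm : UndirEdge B A = UndirEdge A B := by
  ext u v
  simp only [UndirEdge, inter_comm]

instance : Std.Symm (UndirEdge A B) :=
  ⟨fun _ _ h => ⟨h.1.symm, h.2.imp fun _ hk => hk.symm⟩⟩

theorem hasDirectedCycle_of_dirEdge {u v : Fin d} (huv : DirEdge A B u v)
    (hvu : ReflTransGen (Step A B) v u) : HasDirectedCycle A B := by
  obtain ⟨m, f, hf0, hfl, hf⟩ := hvu.exists_fin_walk
  refine ⟨m + 1, Fin.cons u f, by rw [← Fin.succ_last, Fin.cons_succ, hfl]; rfl, ?_, 0, ?_⟩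
  · intro j
    cases j using Fin.cases with
    | zero =>
      simp only [Fin.castSucc_zero, Fin.cons_zero, Fin.cons_succ, hf0]
      exact Or.inl huv
    | succ j => simpa [← Fin.succ_castSucc] using hf j
  · simpa only [Fin.castSucc_zero, Fin.cons_zero, Fin.cons_succ, hf0] using huv

theorem Acyclic.not_reflTransGen_undirEdge (h : Acyclic A B) {u v : Fin d}
    (huv : DirEdge A B u v) : ¬ ReflTransGen (UndirEdge A B) v u :=
  fun hvu => h (hasDirectedCycle_of_dirEdge huv (ReflTransGen.mono (fun _ _ => Or.inr) _ _ hvu))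

end ComparabilityGraph

section TotalRefinement

variable {n d : ℕ}

/-- The precedence relation of a choice `t k ∈ C k` of one element per coordinate: `t k` must come
before every other element of `C k` in the ordered partition refining `C` to `fun k => {t k}`. -/
def Precedes (C : NDType n d) (t : Fin n → Fin d) (u v : Fin d) : Prop :=
  ∃ k, u = t k ∧ v ∈ C k ∧ v ≠ t k

theorem IsRefinement.subset {T C : NDType n d} (hT : IsRefinement T C) (k : Fin n) :
    T k ⊆ C k := by
  obtain ⟨_, _, _, hP⟩ := hT
  obtain ⟨a, -, -, hk⟩ := hP k
  exact hk ▸ inter_subset_left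

/-- The parts of the ordered partition, read off as a rank function `ρ`. -/
theorem exists_rank_of_isTotalRefinement {C T : NDType n d} (hT : IsTotalRefinement T C) :
    ∃ (t : Fin n → Fin d) (m : ℕ) (ρ : Fin d → Fin m), T = (fun k => {t k}) ∧
      (∀ k, t k ∈ C k) ∧ ∀ k, ∀ v ∈ C k, v ≠ t k → ρ (t k) < ρ v := by
  obtain ⟨⟨m, P, ⟨-, hPdisj, hPcover⟩, hP⟩, hsingle⟩ := hT
  choose t ht using hsingle
  choose a _ hbefore hTa using hP
  choose ρ hρ using hPcover
  have htP k : t k ∈ C k ∩ P (a k) := by rw [← hTa k, ht k]; exact mem_singleton_self _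
  have hρt k : ρ (t k) = a k := by
    by_contra hne
    exact disjoint_left.1 (hPdisj _ _ hne) (hρ (t k)) (mem_inter.1 (htP k)).2
  refine ⟨t, m, ρ, funext ht, fun k => (mem_inter.1 (htP k)).1, fun k v hv hvt => ?_⟩
  rw [hρt]
  refine lt_of_le_of_ne (not_lt.1 fun hlt => ?_) fun heq => hvt ?_
  · simpa [hbefore k _ hlt] using mem_inter.2 ⟨hv, hρ v⟩
  · rw [← mem_singleton, ← ht k, hTa k]
    exact mem_inter.2 ⟨hv, heq ▸ hρ v⟩

/-- Conversely the fibres of a surjective rank function form an ordered partition. -/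
theorem isTotalRefinement_of_rank {C : NDType n d} {t : Fin n → Fin d} {m : ℕ}
    {ρ : Fin d → Fin m} (hρ : Function.Surjective ρ) (ht : ∀ k, t k ∈ C k)
    (hlt : ∀ k, ∀ v ∈ C k, v ≠ t k → ρ (t k) < ρ v) :
    IsTotalRefinement (fun k => {t k}) C := by
  classical
  refine ⟨⟨m, fun b => univ.filter (ρ · = b), ⟨fun b => ?_, fun b c hbc => ?_, fun v => ?_⟩,
    fun k => ⟨ρ (t k), ?_, fun b hb => ?_, ?_⟩⟩, fun k => ⟨t k, rfl⟩⟩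
  · obtain ⟨v, rfl⟩ := hρ b
    exact ⟨v, by simp⟩
  · exact disjoint_filter.2 fun v _ hvb hvc => hbc (hvb.symm.trans hvc)
  · exact ⟨ρ v, by simp⟩
  · exact ⟨t k, by simp [ht k]⟩
  · refine eq_empty_of_forall_notMem fun v hv => ?_
    simp only [mem_inter, mem_filter, mem_univ, true_and] at hv
    obtain ⟨hvC, rfl⟩ := hv
    by_cases hvt : v = t k
    · exact hb.ne (hvt ▸ rfl)
    · exact (hlt k v hvC hvt).not_gt hb
  · ext v
    simp only [mem_singleton, mem_inter, mem_filter, mem_univ, true_and]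
    constructor
    · rintro rfl
      exact ⟨ht k, rfl⟩
    · rintro ⟨hvC, hv⟩
      by_contra hvt
      exact (hlt k v hvC hvt).ne hv.symm

theorem isTotalRefinement_iff {T C : NDType n d} :
    IsTotalRefinement T C ↔ ∃ t : Fin n → Fin d, T = (fun k => {t k}) ∧
      (∀ k, t k ∈ C k) ∧ ∀ x, ¬ TransGen (Precedes C t) x x := by
  constructor
  · intro hT
    obtain ⟨t, m, ρ, rfl, ht, hlt⟩ := exists_rank_of_isTotalRefinement hT
    refine ⟨t, rfl, ht, fun x hx => lt_irrefl (ρ x) ?_⟩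
    have hρ : Precedes C t ≤ fun a b => ρ a < ρ b := by
      rintro _ v ⟨k, rfl, hv, hvt⟩
      exact hlt k v hv hvt
    simpa only [transGen_eq_self] using TransGen.lift ρ hρ x x hx
  · rintro ⟨t, rfl, ht, hacyc⟩
    obtain ⟨e, he⟩ := exists_equiv_fin_of_irrefl_transGen hacyc
    exact isTotalRefinement_of_rank e.surjective ht fun k v hv hvt => he _ _ ⟨k, rfl, hv, hvt⟩

theorem IsTotalRefinement.of_subset {T C X : NDType n d} (hT : IsTotalRefinement T C)
    (hXC : ∀ k, X k ⊆ C k) (hTX : ∀ k, T k ⊆ X k) : IsTotalRefinement T X := by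
  obtain ⟨t, rfl, -, hacyc⟩ := isTotalRefinement_iff.1 hT
  refine isTotalRefinement_iff.2 ⟨t, rfl, fun k => singleton_subset_iff.1 (hTX k), ?_⟩
  refine fun x hx => hacyc x (TransGen.mono ?_ _ _ hx)
  rintro _ v ⟨k, rfl, hv, hvt⟩
  exact ⟨k, rfl, hXC k hv, hvt⟩

theorem IsTotalRefinement.union {X Y T : NDType n d} {i : Fin n}
    (hagree : ∀ k, k ≠ i → X k = Y k)
    (hcycle : ∀ u ∈ X i, ∀ v ∈ Y i, v ∉ X i → ¬ ReflTransGen (UndirEdge X Y) v u)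
    (hT : IsTotalRefinement T X) : IsTotalRefinement T (fun k => X k ∪ Y k) := by
  obtain ⟨t, rfl, htX, hacyc⟩ := isTotalRefinement_iff.1 hT
  refine isTotalRefinement_iff.2 ⟨t, rfl, fun k => mem_union_left _ (htX k), fun x hx => ?_⟩
  have hsplit u v (huv : Precedes (fun k => X k ∪ Y k) t u v) :
      Precedes X t u v ∨ (u = t i ∧ v ∈ Y i ∧ v ∉ X i) := by
    obtain ⟨k, rfl, hv, hvt⟩ := huv
    by_cases hvX : v ∈ X k
    · exact Or.inl ⟨k, rfl, hvX, hvt⟩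
    have hvY : v ∈ Y k := (mem_union.1 hv).resolve_left hvX
    obtain rfl : k = i := by
      by_contra hki
      exact hvX (hagree k hki ▸ hvY)
    exact Or.inr ⟨rfl, hvY, hvX⟩
  have hundir :
      (fun u v => Precedes (fun k => X k ∪ Y k) t u v ∧ u ≠ t i) ≤ UndirEdge X Y := by
    rintro _ v ⟨⟨k, rfl, hv, hvt⟩, hki⟩
    have hXY := hagree k fun h => hki (h ▸ rfl)
    have hvX : v ∈ X k := (mem_union.1 hv).elim id (hXY ▸ ·)
    exact ⟨hvt.symm, k, mem_inter.2 ⟨htX k, hXY ▸ htX k⟩,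
      mem_inter.2 ⟨hvX, hXY ▸ hvX⟩⟩
  rcases hx.mono_or_exists hsplit with hcyc | ⟨_, v, ⟨rfl, hvY, hvX⟩, hxa, hvx⟩
  · exact hacyc x hcyc
  · exact hcycle _ (htX i) v hvY hvX
      (ReflTransGen.mono hundir _ _ (hvx.trans hxa).restrict_ne_target)

theorem IsTotalRefinement.of_union {X Y T : NDType n d} {i : Fin n}
    (hagree : ∀ k, k ≠ i → X k = Y k) (hT : IsTotalRefinement T (fun k => X k ∪ Y k))
    (hTi : T i ⊆ X i) : IsTotalRefinement T X := by
  refine hT.of_subset (fun k => subset_union_left) fun k => ?_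
  by_cases hki : k = i
  · exact hki ▸ hTi
  · simpa only [hagree k hki, union_self] using hT.1.subset k

end TotalRefinement

theorem total_refinements_of_union_general {n d : ℕ} (A B : NDType n d)
    (h : Acyclic A B)
    (i : Fin n) (hagree : ∀ j, j ≠ i → A j = B j) :
    (∀ T, IsTotalRefinement T A → IsTotalRefinement T (fun k => A k ∪ B k)) ∧
    (∀ T, IsTotalRefinement T (fun k => A k ∪ B k) ↔
      (IsTotalRefinement T A ∨ IsTotalRefinement T B)) := by
  have hAC T (hT : IsTotalRefinement T A) : IsTotalRefinement T (fun k => A k ∪ B k) :=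
    hT.union hagree fun u hu v hv hvA => h.not_reflTransGen_undirEdge
      ⟨ne_of_mem_of_not_mem hu hvA, i, hu, hv, fun hc => hvA (mem_of_mem_inter_left hc.2)⟩
  have hagree' k (hk : k ≠ i) : B k = A k := (hagree k hk).symm
  have hunion : (fun k => B k ∪ A k) = fun k => A k ∪ B k := funext fun k => union_comm _ _
  have hBC T (hT : IsTotalRefinement T B) : IsTotalRefinement T (fun k => A k ∪ B k) :=
    hunion ▸ hT.union hagree' fun u hu v hv hvB hpath => h.not_reflTransGen_undirEdge
      ⟨(ne_of_mem_of_not_mem hu hvB).symm, i, hv, hu,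
        fun hc => hvB (mem_of_mem_inter_right hc.1)⟩
      (symm_of (ReflTransGen (UndirEdge A B)) (undirEdge_comm ▸ hpath))
  refine ⟨hAC, fun T => ⟨fun hT => ?_, fun hT => hT.elim (hAC T) (hBC T)⟩⟩
  obtain ⟨x, hx⟩ := hT.2 i
  rcases mem_union.1 (hT.1.subset i (hx ▸ mem_singleton_self x)) with hxA | hxB
  · exact Or.inl (hT.of_union hagree (hx ▸ singleton_subset_iff.2 hxA))
  · exact Or.inr ((hunion ▸ hT).of_union hagree' (hx ▸ singleton_subset_iff.2 hxB))

/-- If `CG(A,B)` is acyclic and `A`, `B` agree in all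
coordinates except possibly `i`, then every total refinement of `A` is a total
refinement of `C = A ∪ B`, and the total refinements of `C` are exactly the
total refinements of `A` together with those of `B`. -/
theorem total_refinements_of_union {n d : ℕ} (A B : NDType n d)
    (hA : IsType A) (hB : IsType B) (h : Acyclic A B)
    (i : Fin n) (hagree : ∀ j, j ≠ i → A j = B j) :
    (∀ T, IsTotalRefinement T A → IsTotalRefinement T (fun k => A k ∪ B k)) ∧
    (∀ T, IsTotalRefinement T (fun k => A k ∪ B k) ↔
      (IsTotalRefinement T A ∨ IsTotalRefinement T B)) :=
  total_refinements_of_union_general A B h i hagree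
end

section
/- Let S be a collection of (n,d)-types closed under refinement and with pairwise acyclic comparability graphs, and suppose A ∈ S has every element of [d] appearing in A and no singleton coordinate (|A_i| ≥ 2 for all i). If B is an (n,d)-type whose comparability graph CG(B,A) contains a directed cycle, then CG(B,A') contains a directed cycle for some proper refinement A' of A, or (after relabeling) the cycle has length d, A_i = {i, i+1 mod d} for all i in the cycle coordinates, and the total refinement (1,2,...,d) of B witnesses B having a total refinement contained in A that is not a refinement of A. -/
open Finset

open Pointwise

/-!
Write `x ⇝ y` for reachability in `CG(B,A)`, so that a directed cycle is a directed edge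
`u → w` together with `w ⇝ u`, and suppose that no proper refinement of `A` has a directed
cycle with `B`. Refining `A` by a rank function `f` on `[d]` keeps exactly those edges
`x → y` (through coordinate `i`) for which `y` minimises `f` on `A i`, and since it only
shrinks `A` it keeps directed edges directed.

* Ranking one vertex `z` last keeps every cycle that avoids `z`; so the cycle `u → w ⇝ u`
  meets every vertex and `CG(B,A)` is strongly connected.
* Ranking a vertex `u ∈ B i \ A i` first redirects every path towards `u` straight into `u`,
  while the edges from `u` through `i` stay directed; hence `B ⊆ A`.
* Now the edge `u → w` through `i` is directed because `w ∉ B i`. Refining `B` by distance from `w` (ties broken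
  by label) gives a total `T` in which each vertex is reached from `w` through the minimiser
  of an entry of `B` containing its predecessor; the edge `T i → w` closes a cycle.

Finally, along `CG(A|P, A)` the index of the part containing a vertex never decreases and
strictly increases on directed edges, so `CG(T, A)` having a directed cycle shows that `T`
is not a refinement of `A`.
-/

open Relation

section Walks

variable {α : Type*} {r : α → α → Prop}

theorem reflTransGen_of_walk {k : ℕ} {v : Fin (k + 1) → α}
    (hv : ∀ i : Fin k, r (v i.castSucc) (v i.succ)) {a b : Fin (k + 1)} (hab : a ≤ b) :
    ReflTransGen r (v a) (v b) := by
  induction b using Fin.induction with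
  | zero => rw [Fin.le_zero_iff.mp hab]
  | succ i ih =>
    rcases hab.eq_or_lt with rfl | hlt
    · rfl
    · exact (ih (Fin.le_castSucc_iff.mpr hlt)).tail (hv i)

theorem exists_walk_of_reflTransGen {a b : α} (h : ReflTransGen r a b) :
    ∃ (k : ℕ) (v : Fin (k + 1) → α), v 0 = a ∧ v (Fin.last k) = b ∧
      ∀ i : Fin k, r (v i.castSucc) (v i.succ) := by
  induction h using ReflTransGen.head_induction_on with
  | refl => exact ⟨0, fun _ => b, rfl, rfl, Fin.elim0⟩
  | head hac _ ih =>
    obtain ⟨k, v, h0, hlast, hv⟩ := ih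
    refine ⟨k + 1, Fin.cons _ v, rfl, by rw [← Fin.succ_last, Fin.cons_succ, hlast], ?_⟩
    refine Fin.cases (by simpa [h0] using hac) fun i => ?_
    simpa using hv i

theorem reflTransGen_of_between {r' : α → α → Prop} {a b : α} (h : ReflTransGen r a b)
    (hr : ∀ x y, r x y → ReflTransGen r a y → ReflTransGen r y b → r' x y) :
    ReflTransGen r' a b := by
  suffices ∀ c, ReflTransGen r a c → ReflTransGen r c b → ReflTransGen r' a c from
    this b h .refl
  intro c hac hcb
  induction hac with
  | refl => rfl
  | tail hax hxc ih => exact (ih (.head hxc hcb)).tail (hr _ _ hxc (hax.tail hxc) hcb)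

def ReachableWithin (r : α → α → Prop) (a : α) : ℕ → α → Prop
  | 0, y => y = a
  | k + 1, y => ∃ x, ReachableWithin r a k x ∧ ReflGen r x y

theorem exists_reachableWithin {a b : α} (h : ReflTransGen r a b) :
    ∃ k, ReachableWithin r a k b := by
  induction h with
  | refl => exact ⟨0, rfl⟩
  | tail _ hbc ih =>
    obtain ⟨k, hk⟩ := ih
    exact ⟨k + 1, _, hk, .single hbc⟩

theorem exists_rank_descent {a : α} (h : ∀ x, ReflTransGen r a x) :
    ∃ f : α → ℕ, ∀ x, x ≠ a → ∃ y, r y x ∧ f y < f x := by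
  classical
  refine ⟨fun x => Nat.find (exists_reachableWithin (h x)), fun x hxa => ?_⟩
  have hx := Nat.find_spec (exists_reachableWithin (h x))
  obtain ⟨k, hk⟩ : ∃ k, Nat.find (exists_reachableWithin (h x)) = k + 1 :=
    Nat.exists_eq_succ_of_ne_zero fun h0 => hxa (by rw [h0] at hx; exact hx)
  rw [hk] at hx
  obtain ⟨y, hy, hyx⟩ := hx
  rcases hyx with _ | hyx
  · exact absurd hy (Nat.find_min (m := k) _ (by omega))
  · exact ⟨y, hyx, (Nat.find_min' _ hy).trans_lt (by beta_reduce; omega)⟩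

end Walks

section ComparabilityGraph

variable {n d : ℕ}

theorem step_iff {B A : NDType n d} {u v : Fin d} :
    Step B A u v ↔ u ≠ v ∧ ∃ i, u ∈ B i ∧ v ∈ A i := by
  constructor
  · rintro (⟨hne, i, hu, hv, -⟩ | ⟨hne, i, hu, hv⟩)
    · exact ⟨hne, i, hu, hv⟩
    · exact ⟨hne, i, (mem_inter.mp hu).1, (mem_inter.mp hv).2⟩
  · rintro ⟨hne, i, hu, hv⟩
    by_cases h : u ∈ A i ∧ v ∈ B i
    · exact .inr ⟨hne, i, mem_inter.mpr ⟨hu, h.1⟩, mem_inter.mpr ⟨h.2, hv⟩⟩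
    · exact .inl ⟨hne, i, hu, hv, by simp only [mem_inter]; tauto⟩

theorem dirEdge_iff {B A : NDType n d} {u v : Fin d} :
    DirEdge B A u v ↔ u ≠ v ∧ ∃ i, u ∈ B i ∧ v ∈ A i ∧ (u ∉ A i ∨ v ∉ B i) := by
  simp only [DirEdge, mem_inter]
  constructor <;> rintro ⟨hne, i, hu, hv, h⟩ <;> exact ⟨hne, i, hu, hv, by tauto⟩

theorem hasDirectedCycle_iff {B A : NDType n d} :
    HasDirectedCycle B A ↔ ∃ u w, DirEdge B A u w ∧ ReflTransGen (Step B A) w u := by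
  constructor
  · rintro ⟨k, v, hcl, hstep, i, hdir⟩
    have hend := reflTransGen_of_walk hstep (Fin.le_last i.succ)
    rw [← hcl] at hend
    exact ⟨_, _, hdir, hend.trans (reflTransGen_of_walk hstep (Fin.zero_le _))⟩
  · rintro ⟨u, w, huw, hwu⟩
    obtain ⟨k, v, h0, hlast, hv⟩ := exists_walk_of_reflTransGen hwu
    refine ⟨k + 1, Fin.cons u v, by rw [← Fin.succ_last, Fin.cons_succ, hlast]; rfl, ?_,
      0, by simpa [h0] using huw⟩
    refine Fin.cases (.inl (by simpa [h0] using huw)) fun i => ?_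
    simpa using hv i

end ComparabilityGraph

section Refinement

variable {n d : ℕ}

theorem IsRefinement.subset_s17 {A' A : NDType n d} (h : IsRefinement A' A) (i : Fin n) :
    A' i ⊆ A i := by
  obtain ⟨_, _, _, hP⟩ := h
  obtain ⟨a, -, -, hi⟩ := hP i
  exact hi ▸ inter_subset_left

theorem acyclic_of_rank {β : Type*} [Preorder β] {B A : NDType n d} (φ : Fin d → β)
    (hstep : ∀ x y, Step B A x y → φ x ≤ φ y) (hdir : ∀ x y, DirEdge B A x y → φ x < φ y) :
    Acyclic B A := by
  have hpath {x y} (h : ReflTransGen (Step B A) x y) : φ x ≤ φ y := by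
    induction h with
    | refl => exact le_rfl
    | tail _ hyz ih => exact ih.trans (hstep _ _ hyz)
  rintro hcyc
  obtain ⟨u, w, huw, hwu⟩ := hasDirectedCycle_iff.mp hcyc
  exact (hdir u w huw).not_ge (hpath hwu)

theorem IsRefinement.acyclic {A' A : NDType n d} (h : IsRefinement A' A) : Acyclic A' A := by
  have hsub := h.subset_s17
  obtain ⟨k, P, ⟨-, hdisj, hcover⟩, hP⟩ := h
  choose φ hφ using hcover
  have hpart : ∀ i, ∃ a, (∀ x ∈ A' i, φ x = a) ∧
      ∀ y ∈ A i, a ≤ φ y ∧ (φ y = a → y ∈ A' i) := by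
    intro i
    obtain ⟨a, -, hbelow, hi⟩ := hP i
    refine ⟨a, fun x hx => ?_, fun y hy => ⟨?_, fun hya => ?_⟩⟩
    · rw [hi] at hx
      by_contra hne
      exact disjoint_left.mp (hdisj _ _ hne) (hφ x) (mem_inter.mp hx).2
    · by_contra! hlt
      exact (eq_empty_iff_forall_notMem.mp (hbelow _ hlt)) y (mem_inter.mpr ⟨hy, hφ y⟩)
    · rw [hi]
      exact mem_inter.mpr ⟨hy, hya ▸ hφ y⟩
  refine acyclic_of_rank φ (fun x y hxy => ?_) (fun x y hxy => ?_)
  · obtain ⟨-, i, hx, hy⟩ := step_iff.mp hxy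
    obtain ⟨a, hA', hA⟩ := hpart i
    exact hA' x hx ▸ (hA y hy).1
  · obtain ⟨-, i, hx, hy, hxy⟩ := dirEdge_iff.mp hxy
    obtain ⟨a, hA', hA⟩ := hpart i
    have hy' : y ∉ A' i := hxy.resolve_left (not_not.mpr (hsub i hx))
    rw [hA' x hx]
    exact (hA y hy).1.lt_of_ne fun h => hy' ((hA y hy).2 h.symm)

/-- The refinement `A|P` for the ordered partition `P` of `[d]` into the level sets of `f`,
listed in increasing order of value. -/
def refineByRank {β : Type*} [LinearOrder β] (A : NDType n d) (f : Fin d → β) : NDType n d :=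
  fun i => (A i).filter fun x => ∀ y ∈ A i, f x ≤ f y

variable {β : Type*} [LinearOrder β]

theorem mem_refineByRank {A : NDType n d} {f : Fin d → β} {i : Fin n} {x : Fin d} :
    x ∈ refineByRank A f i ↔ x ∈ A i ∧ ∀ y ∈ A i, f x ≤ f y :=
  mem_filter

theorem isRefinement_refineByRank {A : NDType n d} (hA : IsType A) (f : Fin d → β) :
    IsRefinement (refineByRank A f) A := by
  classical
  let e := (univ.image f).orderIsoOfFin rfl
  have he : ∀ x, ((e (e.symm ⟨f x, mem_image_of_mem f (mem_univ x)⟩) : β)) = f x := by simp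
  refine ⟨_, fun a => univ.filter fun x => f x = e a,
    ⟨fun a => ?_, fun a b hab => ?_, fun x => ⟨_, mem_filter.mpr ⟨mem_univ x, (he x).symm⟩⟩⟩,
    fun i => ?_⟩
  · obtain ⟨x, -, hx⟩ := mem_image.mp (e a).2
    exact ⟨x, mem_filter.mpr ⟨mem_univ x, hx⟩⟩
  · refine disjoint_left.mpr fun x hxa hxb => hab (e.injective (Subtype.ext ?_))
    exact (mem_filter.mp hxa).2.symm.trans (mem_filter.mp hxb).2
  · obtain ⟨x₀, hx₀, hmin⟩ := exists_min_image (A i) f (hA i)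
    refine ⟨e.symm ⟨f x₀, mem_image_of_mem f (mem_univ x₀)⟩, ⟨x₀, by simp [hx₀]⟩,
      fun b hb => ?_, ?_⟩
    · refine eq_empty_of_forall_notMem fun y hy => ?_
      simp only [mem_inter, mem_filter, mem_univ, true_and] at hy
      have hlt : (e b : β) < e (e.symm ⟨f x₀, _⟩) := e.strictMono hb
      rw [he, ← hy.2] at hlt
      exact (hmin y hy.1).not_gt hlt
    · ext x
      simp only [mem_refineByRank, mem_inter, mem_filter, mem_univ, true_and, he]
      exact ⟨fun ⟨hx, hxmin⟩ => ⟨hx, (hxmin x₀ hx₀).antisymm (hmin x hx)⟩,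
        fun ⟨hx, hxe⟩ => ⟨hx, hxe ▸ hmin⟩⟩

theorem exists_refineByRank_eq_singleton {A : NDType n d} (hA : IsType A) {f : Fin d → β}
    (hf : Function.Injective f) (i : Fin n) : ∃ x, refineByRank A f i = {x} := by
  obtain ⟨x, hx, hmin⟩ := exists_min_image (A i) f (hA i)
  refine ⟨x, eq_singleton_iff_unique_mem.mpr ⟨mem_refineByRank.mpr ⟨hx, hmin⟩, fun y hy => ?_⟩⟩
  obtain ⟨hy, hymin⟩ := mem_refineByRank.mp hy
  exact hf ((hymin x hx).antisymm (hmin y hy))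

end Refinement

section CoreCase

variable {n d : ℕ}

theorem reflTransGen_step_of_forall_acyclic {B A : NDType n d}
    (hfull : ∀ j : Fin d, ∃ i, j ∈ A i) (hbig : ∀ i, 2 ≤ (A i).card)
    (hmin : ∀ A', IsRefinement A' A → A' ≠ A → Acyclic B A') (hcyc : HasDirectedCycle B A)
    (x y : Fin d) : ReflTransGen (Step B A) x y := by
  obtain ⟨u, w, huw, hwu⟩ := hasDirectedCycle_iff.mp hcyc
  suffices hbetween : ∀ z, ReflTransGen (Step B A) w z ∧ ReflTransGen (Step B A) z u from
    (hbetween x).2.trans (.head (.inl huw) (hbetween y).1)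
  intro z
  by_contra hz
  set A' := refineByRank A fun x => if x = z then 1 else 0
  have hmem : ∀ i x, x ∈ A' i ↔ x ∈ A i ∧ x ≠ z := by
    intro i x
    obtain ⟨y, hy, hyz⟩ := exists_mem_ne (hbig i) z
    rw [mem_refineByRank]
    refine ⟨fun ⟨hx, hxmin⟩ => ⟨hx, fun hxz => ?_⟩, fun ⟨hx, hxz⟩ => ⟨hx, by simp [hxz]⟩⟩
    simpa [hxz, hyz] using hxmin y hy
  obtain ⟨i, hzi⟩ := hfull z
  refine hmin A' (isRefinement_refineByRank (fun i => card_pos.mp (by linarith [hbig i])) _)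
    (fun h => ((hmem i z).mp (by rwa [h])).2 rfl) (hasDirectedCycle_iff.mpr ⟨u, w, ?_, ?_⟩)
  · obtain ⟨hne, j, hu, hw, hdir⟩ := dirEdge_iff.mp huw
    have hwz : w ≠ z := by rintro rfl; exact hz ⟨.refl, hwu⟩
    exact dirEdge_iff.mpr ⟨hne, j, hu, (hmem j w).mpr ⟨hw, hwz⟩,
      hdir.imp_left fun hu' hu'' => hu' ((hmem j u).mp hu'').1⟩
  · refine reflTransGen_of_between hwu fun x y hxy hwy hyu => ?_
    obtain ⟨hne, j, hx, hy⟩ := step_iff.mp hxy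
    have hyz : y ≠ z := by rintro rfl; exact hz ⟨hwy, hyu⟩
    exact step_iff.mpr ⟨hne, j, hx, (hmem j y).mpr ⟨hy, hyz⟩⟩

theorem subset_of_forall_acyclic {B A : NDType n d}
    (hfull : ∀ j : Fin d, ∃ i, j ∈ A i) (hbig : ∀ i, 2 ≤ (A i).card)
    (hmin : ∀ A', IsRefinement A' A → A' ≠ A → Acyclic B A')
    (hreach : ∀ x y, ReflTransGen (Step B A) x y) (i : Fin n) : B i ⊆ A i := by
  intro u hu
  by_contra huA
  have hA : IsType A := fun i => card_pos.mp (by linarith [hbig i])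
  set A' := refineByRank A fun x => if x = u then 0 else 1
  have hmem : ∀ j x, x ∈ A' j ↔ x ∈ A j ∧ (x = u ∨ u ∉ A j) := by
    intro j x
    rw [mem_refineByRank]
    by_cases hxu : x = u
    · subst hxu
      simp
    · by_cases huj : u ∈ A j
      · simp [hxu, huj]
      · refine ⟨fun ⟨hx, _⟩ => ⟨hx, .inr huj⟩, fun ⟨hx, _⟩ => ⟨hx, fun y hy => ?_⟩⟩
        simp [hxu, show y ≠ u by rintro rfl; exact huj hy]
  have hpath : ∀ x, ReflTransGen (Step B A) x u → ReflTransGen (Step B A') x u := by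
    intro x hx
    induction hx using ReflTransGen.head_induction_on with
    | refl => rfl
    | @head x y hxy _ ih =>
      obtain ⟨hne, j, hx, hy⟩ := step_iff.mp hxy
      by_cases huj : u ∈ A j
      · rcases eq_or_ne x u with rfl | hxu
        · rfl
        · exact .single (step_iff.mpr ⟨hxu, j, hx, (hmem j u).mpr ⟨huj, .inl rfl⟩⟩)
      · exact .head (step_iff.mpr ⟨hne, j, hx, (hmem j y).mpr ⟨hy, .inr huj⟩⟩) ih
  obtain ⟨w, hw⟩ := hA i
  obtain ⟨j, huj⟩ := hfull u
  obtain ⟨y, hy, hyu⟩ := exists_mem_ne (hbig j) u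
  refine hmin A' (isRefinement_refineByRank hA _) (fun h => ?_)
    (hasDirectedCycle_iff.mpr ⟨u, w, ?_, hpath w (hreach w u)⟩)
  · have := (hmem j y).mp (by rwa [h])
    tauto
  · exact dirEdge_iff.mpr ⟨fun h => huA (h ▸ hw), i, hu, (hmem i w).mpr ⟨hw, .inr huA⟩,
      .inl fun h => huA ((hmem i u).mp h).1⟩

theorem exists_isTotalRefinement_hasDirectedCycle {B A : NDType n d} (hB : IsType B)
    (hBA : ∀ i, B i ⊆ A i) {u w : Fin d} (huw : DirEdge B A u w)
    (hreach : ∀ x, ReflTransGen (Step B A) w x) :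
    ∃ T, IsTotalRefinement T B ∧ HasDirectedCycle T A := by
  obtain ⟨ρ, hρ⟩ := exists_rank_descent hreach
  set T := refineByRank B fun x => toLex (ρ x, x)
  have hT : IsTotalRefinement T B :=
    ⟨isRefinement_refineByRank hB _, exists_refineByRank_eq_singleton hB
      fun x y h => (Prod.ext_iff.mp (toLex.injective h)).2⟩
  have hTB : ∀ i x, x ∈ T i → x ∈ B i := fun i x hx => (mem_refineByRank.mp hx).1
  have hTmin : ∀ i x y, x ∈ T i → y ∈ B i → ρ x ≤ ρ y := fun i x y hx hy =>
    (Prod.Lex.le_iff.mp ((mem_refineByRank.mp hx).2 y hy)).elim le_of_lt fun h => h.1.le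
  have hTne : ∀ i, ∃ x, x ∈ T i := fun i =>
    let ⟨x, hx⟩ := hT.2 i
    ⟨x, hx ▸ mem_singleton_self x⟩
  have hreachT : ∀ x, ReflTransGen (Step T A) w x := by
    intro x
    induction hk : ρ x using Nat.strong_induction_on generalizing x with
    | _ k ih =>
      rcases eq_or_ne x w with rfl | hxw
      · rfl
      obtain ⟨y, hyx, hlt⟩ := hρ x hxw
      obtain ⟨-, j, hy, hx⟩ := step_iff.mp hyx
      obtain ⟨z, hz⟩ := hTne j
      have hzy := hTmin j z y hz hy
      have hzx : z ≠ x := by rintro rfl; omega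
      exact (ih (ρ z) (by omega) z rfl).tail (step_iff.mpr ⟨hzx, j, hz, hx⟩)
  obtain ⟨-, i, hu, hw, hdir⟩ := dirEdge_iff.mp huw
  have hwB : w ∉ B i := hdir.resolve_left (not_not.mpr (hBA i hu))
  obtain ⟨z, hz⟩ := hTne i
  exact ⟨T, hT, hasDirectedCycle_iff.mpr ⟨z, w, dirEdge_iff.mpr
    ⟨fun h => hwB (h ▸ hTB i z hz), i, hz, hw, .inr fun h => hwB (hTB i w h)⟩, hreachT z⟩⟩

end CoreCase

theorem reconstruction_core_case_general {n d : ℕ} (A : NDType n d)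
    (hfull : ∀ j : Fin d, ∃ i, j ∈ A i)
    (hbig : ∀ i, 2 ≤ (A i).card)
    (B : NDType n d) (hB : IsType B) (hcyc : HasDirectedCycle B A) :
    (∃ A', IsRefinement A' A ∧ A' ≠ A ∧ HasDirectedCycle B A') ∨
    (∃ T, IsTotalRefinement T B ∧ (∀ i, T i ⊆ A i) ∧ ¬ IsRefinement T A) := by
  refine or_iff_not_imp_left.mpr fun hproper => ?_
  have hmin : ∀ A', IsRefinement A' A → A' ≠ A → Acyclic B A' :=
    fun A' hA' hne hcyc' => hproper ⟨A', hA', hne, hcyc'⟩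
  have hreach := reflTransGen_step_of_forall_acyclic hfull hbig hmin hcyc
  have hBA := subset_of_forall_acyclic hfull hbig hmin hreach
  obtain ⟨u, w, huw, -⟩ := hasDirectedCycle_iff.mp hcyc
  obtain ⟨T, hT, hTA⟩ := exists_isTotalRefinement_hasDirectedCycle hB hBA huw (hreach w)
  exact ⟨T, hT, fun i => (hT.1.subset_s17 i).trans (hBA i), fun h => h.acyclic hTA⟩

/-- Core case analysis of the reconstruction theorem: let `S`
be a refinement-closed collection of types with pairwise acyclic comparability
graphs, and let `A ∈ S` contain every element of `[d]` and have no singleton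
coordinate. If `CG(B,A)` has a directed cycle for some `(n,d)`-type `B`, then
either `CG(B,A')` has a directed cycle for some proper refinement `A'` of `A`,
or `B` has a total refinement `T` contained in `A` componentwise which is not a
refinement of `A`. -/
theorem reconstruction_core_case {n d : ℕ} (S : Set (NDType n d))
    (htype : ∀ A ∈ S, IsType A)
    (hcomp : ∀ A ∈ S, ∀ B ∈ S, Acyclic A B)
    (hsurr : ∀ A ∈ S, ∀ C, IsRefinement C A → C ∈ S)
    (A : NDType n d) (hA : A ∈ S)
    (hfull : ∀ j : Fin d, ∃ i, j ∈ A i)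
    (hbig : ∀ i, 2 ≤ (A i).card)
    (B : NDType n d) (hB : IsType B) (hcyc : HasDirectedCycle B A) :
    (∃ A', IsRefinement A' A ∧ A' ≠ A ∧ HasDirectedCycle B A') ∨
    (∃ T, IsTotalRefinement T B ∧ (∀ i, T i ⊆ A i) ∧ ¬ IsRefinement T A) :=
  reconstruction_core_case_general A hfull hbig B hB hcyc
end
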